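/- Let G be a finite simple graph with minimum degree δ(G) = 1. Then G is 2-γ'MB-critical if and only if G is isomorphic to the disjoint union of H₂ and H_m for some m ≥ 2. -/

import Mathlib

/-- `D` is a dominating set of `G`: every vertex not in `D` has a neighbor in `D`. -/
def Dominating {V : Type*} (G : SimpleGraph V) (D : Set V) : Prop :=
  ∀ v, v ∉ D → ∃ d ∈ D, G.Adj d v

/-- Dominator wins the S-game on `G` within one move. -/
def WinsWithin1 {V : Type*} (G : SimpleGraph V) : Prop :=
  ∀ s₁ : V, ∃ d₁, d₁ ≠ s₁ ∧ Dominating G {d₁}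

/-- Dominator wins the S-game on `G` within two moves. -/
def WinsWithin2 {V : Type*} (G : SimpleGraph V) : Prop :=
  ∀ s₁ : V, ∃ d₁, d₁ ≠ s₁ ∧
    (Dominating G {d₁} ∨
      ∀ s₂, s₂ ∉ ({s₁, d₁} : Set V) →
        ∃ d₂, d₂ ∉ ({s₁, d₁, s₂} : Set V) ∧ Dominating G {d₁, d₂})

/-- `γ'MB(G) = 2`: Dominator wins the S-game within two moves but not within one. -/
def MBPrimeEqTwo {V : Type*} (G : SimpleGraph V) : Prop :=
  WinsWithin2 G ∧ ¬ WinsWithin1 G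

/-- `G` is `2`-`γ'MB`-critical: `γ'MB(G) = 2` and for every edge `e`, Dominator does not
win the S-game on `G - e` within two moves. -/
def Critical2 {V : Type*} (G : SimpleGraph V) : Prop :=
  MBPrimeEqTwo G ∧ ∀ u v : V, G.Adj u v → ¬ WinsWithin2 (G.deleteEdges {s(u, v)})

/-- The graph `H_m`, the join of `K₂` with the complement of `K_{m-2}`: the first two
vertices are adjacent to everything, the remaining vertices form an independent set.
(`H₀` is the null graph, `H₂ = K₂`.) -/
def HGraph (m : ℕ) : SimpleGraph (Fin m) :=
  SimpleGraph.fromRel (fun u _ => u.val < 2)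

/-- The disjoint union of two simple graphs. -/
def DisjUnion {α β : Type*} (G : SimpleGraph α) (H : SimpleGraph β) :
    SimpleGraph (α ⊕ β) :=
  SimpleGraph.fromRel (fun u v =>
    match u, v with
    | .inl a, .inl b => G.Adj a b
    | .inr a, .inr b => H.Adj a b
    | _, _ => False)

/-! If `v` is a leaf with neighbour `w`, Staller's opening move `w` forces Dominator to take `v`,
after which every further Staller move inside `G - {v, w}` must be answered by a vertex
dominating all of `G - {v, w}`: this graph has two universal vertices `x`, `y`. Conversely,
Dominator then wins by pairing `{v, w}` with `{x, y}`, and criticality says that no edge can be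
deleted without breaking this pairing strategy. That removes every edge at `w` other than `vw`
and every edge avoiding `x` and `y`, which leaves `H₂ ∪ H_m`; and in `H₂ ∪ H_m` minus any edge,
Staller's first move leaves Dominator no dominating pair. -/

section

open SimpleGraph

variable {V : Type*} {G G' : SimpleGraph V} {a b b₁ b₂ c d₁ d₂ s t₁ t₂ u v w x y : V}

lemma dominating_singleton_iff : Dominating G {a} ↔ ∀ u, u ≠ a → G.Adj a u := by
  simp [Dominating]

lemma dominating_pair_iff :
    Dominating G {a, b} ↔ ∀ u, u ≠ a → u ≠ b → G.Adj a u ∨ G.Adj b u := by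
  simp [Dominating]

lemma winsWithin1_of_forall_ne_eq (hvw : G.Adj v w) (hV : ∀ u, u ≠ v → u = w) :
    WinsWithin1 G := by
  intro s₁
  by_cases hs : s₁ = v
  · refine ⟨w, hs ▸ hvw.ne', dominating_singleton_iff.2 fun u hu => ?_⟩
    obtain rfl : u = v := by by_contra h; exact hu (hV u h)
    exact hvw.symm
  · exact ⟨v, Ne.symm hs, dominating_singleton_iff.2 fun u hu => hV u hu ▸ hvw⟩

lemma not_winsWithin2_of_forall_not_dominating (ht : t₁ ≠ t₂) (ht₁ : t₁ ≠ s) (ht₂ : t₂ ≠ s)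
    (h : ∀ d₁ d₂, d₁ ≠ s → d₂ ≠ s → ¬ Dominating G {d₁, d₂}) : ¬ WinsWithin2 G := by
  intro hW
  obtain ⟨d₁, hd₁, hwin⟩ := hW s
  rcases hwin with hdom | hnext
  · exact h d₁ d₁ hd₁ hd₁ (by rwa [Set.pair_eq_singleton])
  · obtain ⟨t, hts, htd⟩ : ∃ t, t ≠ s ∧ t ≠ d₁ := by
      by_cases h₁ : t₁ = d₁
      · exact ⟨t₂, ht₂, h₁ ▸ ht.symm⟩
      · exact ⟨t₁, ht₁, h₁⟩
    obtain ⟨d₂, hd₂, hdom⟩ := hnext t (by simp [hts, htd])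
    simp only [Set.mem_insert_iff, Set.mem_singleton_iff, not_or] at hd₂
    exact h d₁ d₂ hd₁ hd₂.1 hdom

lemma not_winsWithin2_of_isolated (ht : t₁ ≠ t₂) (ht₁ : t₁ ≠ s) (ht₂ : t₂ ≠ s)
    (hs : ∀ a, ¬ G.Adj a s) : ¬ WinsWithin2 G :=
  not_winsWithin2_of_forall_not_dominating ht ht₁ ht₂ fun _ _ h₁ h₂ hdom =>
    (dominating_pair_iff.1 hdom s h₁.symm h₂.symm).elim (hs _) (hs _)

lemma exists_reply_of_dominating_pairs (hb : b₁ ≠ b₂) (hs₁ : s ≠ b₁) (hs₂ : s ≠ b₂)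
    (ha₁ : a ≠ b₁) (ha₂ : a ≠ b₂) (h₁ : Dominating G {a, b₁}) (h₂ : Dominating G {a, b₂}) :
    ∀ s₂, s₂ ∉ ({s, a} : Set V) →
      ∃ d₂, d₂ ∉ ({s, a, s₂} : Set V) ∧ Dominating G {a, d₂} := by
  intro s₂ _
  by_cases h : s₂ = b₁
  · exact ⟨b₂, by simp [Ne.symm hs₂, Ne.symm ha₂, h, Ne.symm hb], h₂⟩
  · exact ⟨b₁, by simp [Ne.symm hs₁, Ne.symm ha₁, Ne.symm h], h₁⟩

structure IsHub (G : SimpleGraph V) (v w h : V) : Prop where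
  ne_left : h ≠ v
  ne_right : h ≠ w
  adj : ∀ u, u ≠ v → u ≠ w → u ≠ h → G.Adj h u

lemma IsHub.deleteEdges {e : Sym2 V} (hh : IsHub G v w x)
    (he : ∀ u, u ≠ v → u ≠ w → e ≠ s(x, u)) : IsHub (G.deleteEdges {e}) v w x :=
  ⟨hh.ne_left, hh.ne_right, fun u huv huw hux =>
    deleteEdges_adj.2 ⟨hh.adj u huv huw hux, by simpa using (he u huv huw).symm⟩⟩

lemma IsHub.dominating_pair (hvw : G.Adj v w) (hc : c = v ∨ c = w) (hh : IsHub G v w x) :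
    Dominating G {c, x} := by
  refine dominating_pair_iff.2 fun u huc hux => ?_
  by_cases hu : u = v ∨ u = w
  · left
    rcases hc with rfl | rfl <;> rcases hu with rfl | rfl
    exacts [absurd rfl huc, hvw, hvw.symm, absurd rfl huc]
  · push Not at hu
    exact Or.inr (hh.adj u hu.1 hu.2 hux)

/-- Pairing strategy: Dominator answers in the pair, `{v, w}` or `{x, y}`, that Staller
touched; one vertex from each pair always dominates. -/
lemma winsWithin2_of_isHub (hvw : G.Adj v w) (hxy : x ≠ y) (hx : IsHub G v w x)
    (hy : IsHub G v w y) : WinsWithin2 G := by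
  intro s₁
  by_cases hs : s₁ = x ∨ s₁ = y
  · obtain ⟨h, hh, hhs⟩ : ∃ h, IsHub G v w h ∧ h ≠ s₁ := by
      rcases hs with rfl | rfl
      exacts [⟨y, hy, hxy.symm⟩, ⟨x, hx, hxy⟩]
    have hsv : s₁ ≠ v := by rcases hs with rfl | rfl; exacts [hx.ne_left, hy.ne_left]
    have hsw : s₁ ≠ w := by rcases hs with rfl | rfl; exacts [hx.ne_right, hy.ne_right]
    refine ⟨h, hhs, Or.inr (exists_reply_of_dominating_pairs hvw.ne hsv hsw hh.ne_left
      hh.ne_right ?_ ?_)⟩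
    · rw [Set.pair_comm]; exact hh.dominating_pair hvw (Or.inl rfl)
    · rw [Set.pair_comm]; exact hh.dominating_pair hvw (Or.inr rfl)
  · push Not at hs
    obtain ⟨c, hc, hcs⟩ : ∃ c, (c = v ∨ c = w) ∧ c ≠ s₁ := by
      by_cases h : s₁ = v
      · exact ⟨w, Or.inr rfl, h ▸ hvw.ne'⟩
      · exact ⟨v, Or.inl rfl, Ne.symm h⟩
    have hcx : c ≠ x := by rcases hc with rfl | rfl; exacts [hx.ne_left.symm, hx.ne_right.symm]
    have hcy : c ≠ y := by rcases hc with rfl | rfl; exacts [hy.ne_left.symm, hy.ne_right.symm]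
    exact ⟨c, hcs, Or.inr (exists_reply_of_dominating_pairs hxy hs.1 hs.2 hcx hcy
      (hx.dominating_pair hvw hc) (hy.dominating_pair hvw hc))⟩

lemma exists_isHub_of_winsWithin2 (hW : WinsWithin2 G) (hv : ∀ u, G.Adj v u ↔ u = w)
    (hsv : s ≠ v) (hsw : s ≠ w) : ∃ h, h ≠ s ∧ IsHub G v w h := by
  have hvw : v ≠ w := ((hv w).2 rfl).ne
  obtain ⟨d₁, hd₁w, hwin⟩ := hW w
  obtain rfl : d₁ = v := by
    by_contra hne
    rcases hwin with hdom | hnext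
    · exact hd₁w ((hv d₁).1 (dominating_singleton_iff.1 hdom v (Ne.symm hne)).symm)
    · obtain ⟨d₂, hd₂, hdom⟩ := hnext v (by simp [hvw, Ne.symm hne])
      simp only [Set.mem_insert_iff, Set.mem_singleton_iff, not_or] at hd₂
      rcases dominating_pair_iff.1 hdom v (Ne.symm hne) (Ne.symm hd₂.2.2) with h | h
      exacts [hd₁w ((hv _).1 h.symm), hd₂.1 ((hv _).1 h.symm)]
  rcases hwin with hdom | hnext
  · exact absurd ((hv s).1 (dominating_singleton_iff.1 hdom s hsv)) hsw
  · obtain ⟨h, hh, hdom⟩ := hnext s (by simp [hsv, hsw])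
    simp only [Set.mem_insert_iff, Set.mem_singleton_iff, not_or] at hh
    refine ⟨h, hh.2.2, hh.2.1, hh.1, fun u huv huw huh => ?_⟩
    exact (dominating_pair_iff.1 hdom u huv huh).resolve_left fun h' => huw ((hv u).1 h')

/-- `G ≅ H₂ ∪ H_m` with the `H₂` on `{v, w}` and `x`, `y` the two universal vertices of
`H_m`. -/
structure IsH2UnionHm (G : SimpleGraph V) (v w x y : V) : Prop where
  adj_left_iff : ∀ u, G.Adj v u ↔ u = w
  adj_right_iff : ∀ u, G.Adj w u ↔ u = v
  x_ne_y : x ≠ y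
  isHub_x : IsHub G v w x
  isHub_y : IsHub G v w y
  not_adj : ∀ a b, a ≠ v → a ≠ w → a ≠ x → a ≠ y → b ≠ v → b ≠ w → b ≠ x → b ≠ y →
    ¬ G.Adj a b

namespace IsH2UnionHm

variable (S : IsH2UnionHm G v w x y)
include S

lemma adj_vw : G.Adj v w := (S.adj_left_iff w).2 rfl

lemma v_ne_w : v ≠ w := S.adj_vw.ne

lemma symm : IsH2UnionHm G v w y x :=
  ⟨S.adj_left_iff, S.adj_right_iff, S.x_ne_y.symm, S.isHub_y, S.isHub_x,
    fun a b hav haw hay hax hbv hbw hby hbx => S.not_adj a b hav haw hax hay hbv hbw hbx hby⟩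

lemma not_adj_of_eq_or_eq (hc : c = v ∨ c = w) (huv : u ≠ v) (huw : u ≠ w) : ¬ G.Adj c u := by
  rcases hc with rfl | rfl
  exacts [fun h => huw ((S.adj_left_iff u).1 h), fun h => huv ((S.adj_right_iff u).1 h)]

lemma eq_or_eq_of_adj (h : G.Adj a b) (hav : a ≠ v) (haw : a ≠ w) (hbv : b ≠ v) (hbw : b ≠ w)
    (hbx : b ≠ x) (hby : b ≠ y) : a = x ∨ a = y := by
  by_contra! hne
  exact S.not_adj a b hav haw hne.1 hne.2 hbv hbw hbx hby h

lemma adj_iff_of_ne (hav : a ≠ v) (haw : a ≠ w) (hbv : b ≠ v) (hbw : b ≠ w) :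
    G.Adj a b ↔ a ≠ b ∧ (a = x ∨ a = y ∨ b = x ∨ b = y) := by
  refine ⟨fun h => ⟨h.ne, ?_⟩, ?_⟩
  · by_contra! hne
    exact S.not_adj a b hav haw hne.1 hne.2.1 hbv hbw hne.2.2.1 hne.2.2.2 h
  · rintro ⟨hab, h | h | h | h⟩ <;> subst h
    exacts [S.isHub_x.adj b hbv hbw hab.symm, S.isHub_y.adj b hbv hbw hab.symm,
      (S.isHub_x.adj a hav haw hab).symm, (S.isHub_y.adj a hav haw hab).symm]

lemma adj_iff : G.Adj a b ↔ s(a, b) = s(v, w) ∨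
    (a ≠ v ∧ a ≠ w ∧ b ≠ v ∧ b ≠ w ∧ a ≠ b ∧ (a = x ∨ a = y ∨ b = x ∨ b = y)) := by
  have hvw := S.v_ne_w
  rcases eq_or_ne a v with rfl | hav
  · simp [S.adj_left_iff, hvw]
  rcases eq_or_ne a w with rfl | haw
  · simp [S.adj_right_iff, hvw.symm]
  rcases eq_or_ne b v with rfl | hbv
  · rw [G.adj_comm]; simp [S.adj_left_iff, hav, haw]
  rcases eq_or_ne b w with rfl | hbw
  · rw [G.adj_comm]; simp [S.adj_right_iff, hav, haw]
  simp [S.adj_iff_of_ne hav haw hbv hbw, hav, haw, hbv, hbw]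

lemma not_dominating_singleton (d : V) : ¬ Dominating G {d} := by
  intro h
  have hx := S.isHub_x
  by_cases hd : d = v ∨ d = w
  · have hxd : x ≠ d := by rcases hd with rfl | rfl; exacts [hx.ne_left, hx.ne_right]
    exact S.not_adj_of_eq_or_eq hd hx.ne_left hx.ne_right (dominating_singleton_iff.1 h x hxd)
  · push Not at hd
    exact hd.2 ((S.adj_left_iff d).1 (dominating_singleton_iff.1 h v (Ne.symm hd.1)).symm)

/-- A dominating pair of a spanning subgraph must dominate `v`, so it contains `v` or `w`;
its other vertex then has to dominate `G - {v, w}` alone. -/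
lemma exists_isHub_of_dominating (hG' : G' ≤ G) (h : Dominating G' {d₁, d₂}) :
    ∃ e, (e = d₁ ∨ e = d₂) ∧ IsHub G' v w e := by
  have hx := S.isHub_x
  have key : ∀ c e, (c = v ∨ c = w) → Dominating G' {c, e} → IsHub G' v w e := by
    intro c e hc hdom
    have hc' : ∀ z, z ≠ v → z ≠ w → z ≠ c ∧ ¬ G'.Adj c z := fun z hzv hzw =>
      ⟨by rintro rfl; exact hc.elim hzv hzw, fun hcz => S.not_adj_of_eq_or_eq hc hzv hzw (hG' hcz)⟩
    have he : ¬ (e = v ∨ e = w) := by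
      intro he
      have hxe : x ≠ e := by rintro rfl; exact he.elim hx.ne_left hx.ne_right
      rcases dominating_pair_iff.1 hdom x (hc' x hx.ne_left hx.ne_right).1 hxe with h | h
      exacts [(hc' x hx.ne_left hx.ne_right).2 h,
        S.not_adj_of_eq_or_eq he hx.ne_left hx.ne_right (hG' h)]
    push Not at he
    exact ⟨he.1, he.2, fun z hzv hzw hze =>
      (dominating_pair_iff.1 hdom z (hc' z hzv hzw).1 hze).resolve_left (hc' z hzv hzw).2⟩
  have hvw : (d₁ = v ∨ d₁ = w) ∨ (d₂ = v ∨ d₂ = w) := by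
    by_cases h₁ : d₁ = v
    · exact Or.inl (Or.inl h₁)
    by_cases h₂ : d₂ = v
    · exact Or.inr (Or.inl h₂)
    rcases dominating_pair_iff.1 h v (Ne.symm h₁) (Ne.symm h₂) with h | h
    · exact Or.inl (Or.inr ((S.adj_left_iff _).1 (hG' h).symm))
    · exact Or.inr (Or.inr ((S.adj_left_iff _).1 (hG' h).symm))
  rcases hvw with hc | hc
  · exact ⟨d₂, Or.inr rfl, key d₁ d₂ hc h⟩
  · exact ⟨d₁, Or.inl rfl, key d₂ d₁ hc (Set.pair_comm d₁ d₂ ▸ h)⟩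

lemma not_winsWithin2_deleteEdges_vw : ¬ WinsWithin2 (G.deleteEdges {s(v, w)}) :=
  not_winsWithin2_of_isolated S.x_ne_y S.isHub_x.ne_left S.isHub_y.ne_left fun a ha => by
    rw [deleteEdges_adj] at ha
    obtain rfl := (S.adj_left_iff a).1 ha.1.symm
    simp [Sym2.eq_swap] at ha

/-- Staller takes `y`, the only neighbour of the leaf `u` left in `G - xu`. -/
lemma not_winsWithin2_deleteEdges_leaf (huv : u ≠ v) (huw : u ≠ w) (hux : u ≠ x) (huy : u ≠ y) :
    ¬ WinsWithin2 (G.deleteEdges {s(x, u)}) := by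
  have hx := S.isHub_x
  refine not_winsWithin2_of_forall_not_dominating S.v_ne_w S.isHub_y.ne_left.symm
    S.isHub_y.ne_right.symm fun d₁ d₂ h₁ h₂ hdom => ?_
  obtain ⟨e, he, hub⟩ := S.exists_isHub_of_dominating (G.deleteEdges_le _) hdom
  have hey : e ≠ y := by rcases he with rfl | rfl <;> assumption
  by_cases heu : e = u
  · subst heu
    simpa [Sym2.eq_swap] using hub.adj x hx.ne_left hx.ne_right hux.symm
  · have heu' := deleteEdges_adj.1 (hub.adj u huv huw (Ne.symm heu))
    have hex : e ≠ x := by rintro rfl; simp at heu'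
    exact (S.eq_or_eq_of_adj heu'.1 hub.ne_left hub.ne_right huv huw hux huy).elim hex hey

lemma not_winsWithin2_deleteEdges_xy : ¬ WinsWithin2 (G.deleteEdges {s(x, y)}) := by
  have hx := S.isHub_x
  have hy := S.isHub_y
  by_cases hleaf : ∃ u, u ≠ v ∧ u ≠ w ∧ u ≠ x ∧ u ≠ y
  · -- Staller takes a leaf `u`; a dominating pair then needs a hub adjacent to the other hub
    obtain ⟨u, huv, huw, hux, huy⟩ := hleaf
    refine not_winsWithin2_of_forall_not_dominating S.v_ne_w huv.symm huw.symm
      fun d₁ d₂ h₁ h₂ hdom => ?_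
    obtain ⟨e, he, hub⟩ := S.exists_isHub_of_dominating (G.deleteEdges_le _) hdom
    have heu : e ≠ u := by rcases he with rfl | rfl <;> assumption
    have heu' := deleteEdges_adj.1 (hub.adj u huv huw heu.symm)
    rcases S.eq_or_eq_of_adj heu'.1 hub.ne_left hub.ne_right huv huw hux huy with rfl | rfl
    · simpa using hub.adj y hy.ne_left hy.ne_right S.x_ne_y.symm
    · simpa [Sym2.eq_swap] using hub.adj x hx.ne_left hx.ne_right S.x_ne_y
  · -- without leaves, `x` is isolated in `G - xy`
    push Not at hleaf
    refine not_winsWithin2_of_isolated S.v_ne_w hx.ne_left.symm hx.ne_right.symm fun a ha => ?_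
    rw [deleteEdges_adj] at ha
    have hav : a ≠ v := by rintro rfl; exact hx.ne_right ((S.adj_left_iff x).1 ha.1)
    have haw : a ≠ w := by rintro rfl; exact hx.ne_left ((S.adj_right_iff x).1 ha.1)
    obtain rfl := hleaf a hav haw ha.1.ne
    simp [Sym2.eq_swap] at ha

lemma edge_cases (h : G.Adj a b) : s(a, b) = s(v, w) ∨ s(a, b) = s(x, y) ∨
    ∃ u, u ≠ v ∧ u ≠ w ∧ u ≠ x ∧ u ≠ y ∧ (s(a, b) = s(x, u) ∨ s(a, b) = s(y, u)) := by
  rcases S.adj_iff.1 h with h | ⟨hav, haw, hbv, hbw, hab, hh⟩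
  · exact Or.inl h
  right
  have hub_first : ∀ a b, b ≠ v → b ≠ w → a ≠ b → (a = x ∨ a = y) → s(a, b) = s(x, y) ∨
      ∃ u, u ≠ v ∧ u ≠ w ∧ u ≠ x ∧ u ≠ y ∧ (s(a, b) = s(x, u) ∨ s(a, b) = s(y, u)) := by
    rintro a b hbv hbw hab (rfl | rfl)
    · by_cases hby : b = y
      · exact Or.inl (hby ▸ rfl)
      · exact Or.inr ⟨b, hbv, hbw, hab.symm, hby, Or.inl rfl⟩
    · by_cases hbx : b = x
      · exact Or.inl (hbx ▸ Sym2.eq_swap)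
      · exact Or.inr ⟨b, hbv, hbw, hbx, hab.symm, Or.inr rfl⟩
  rcases hh with hh | hh | hh | hh
  · exact hub_first a b hbv hbw hab (Or.inl hh)
  · exact hub_first a b hbv hbw hab (Or.inr hh)
  · rw [Sym2.eq_swap]; exact hub_first b a hav haw hab.symm (Or.inl hh)
  · rw [Sym2.eq_swap]; exact hub_first b a hav haw hab.symm (Or.inr hh)

theorem critical2 : Critical2 G := by
  refine ⟨⟨winsWithin2_of_isHub S.adj_vw S.x_ne_y S.isHub_x S.isHub_y, fun h => ?_⟩,
    fun a b hab => ?_⟩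
  · obtain ⟨d, -, hd⟩ := h v
    exact S.not_dominating_singleton d hd
  · rcases S.edge_cases hab with h | h | ⟨u, huv, huw, hux, huy, h | h⟩ <;> rw [h]
    exacts [S.not_winsWithin2_deleteEdges_vw, S.not_winsWithin2_deleteEdges_xy,
      S.not_winsWithin2_deleteEdges_leaf huv huw hux huy,
      S.symm.not_winsWithin2_deleteEdges_leaf huv huw huy hux]

end IsH2UnionHm

theorem Critical2.exists_isH2UnionHm (hC : Critical2 G) (hv : G.neighborSet v = {w}) :
    ∃ x y, IsH2UnionHm G v w x y := by
  have hadj_v : ∀ u, G.Adj v u ↔ u = w := fun u => by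
    rw [← mem_neighborSet, hv, Set.mem_singleton_iff]
  have hvw : G.Adj v w := (hadj_v w).2 rfl
  obtain ⟨z, hzv, hzw⟩ : ∃ z, z ≠ v ∧ z ≠ w := by
    by_contra! hV
    exact hC.1.2 (winsWithin1_of_forall_ne_eq hvw hV)
  obtain ⟨x, -, hx⟩ := exists_isHub_of_winsWithin2 hC.1.1 hadj_v hzv hzw
  obtain ⟨y, hyx, hy⟩ := exists_isHub_of_winsWithin2 hC.1.1 hadj_v hx.ne_left hx.ne_right
  have hwins : ∀ e : Sym2 V, e ≠ s(v, w) → (∀ u, u ≠ v → u ≠ w → e ≠ s(x, u) ∧ e ≠ s(y, u)) →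
      WinsWithin2 (G.deleteEdges {e}) := fun e hvw' he =>
    winsWithin2_of_isHub (deleteEdges_adj.2 ⟨hvw, by simpa using hvw'.symm⟩) (Ne.symm hyx)
      (hx.deleteEdges fun u huv huw => (he u huv huw).1)
      (hy.deleteEdges fun u huv huw => (he u huv huw).2)
  refine ⟨x, y, hadj_v, fun u => ⟨fun hwu => ?_, ?_⟩, Ne.symm hyx, hx, hy,
    fun a b hav haw hax hay hbv hbw hbx hby hab => ?_⟩
  · by_contra huv
    refine hC.2 w u hwu (hwins _ ?_ fun u' hu'v hu'w => ?_)
    · simp [huv, hvw.ne']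
    · simp [hx.ne_right.symm, hy.ne_right.symm, hu'w.symm]
  · rintro rfl
    exact hvw.symm
  · refine hC.2 a b hab (hwins _ ?_ fun u' hu'v hu'w => ?_)
    · simp [hav, haw]
    · simp [hax, hay, hbx, hby]

section DisjUnion

variable {α β : Type*} {G₁ : SimpleGraph α} {G₂ : SimpleGraph β}

@[simp] lemma disjUnion_adj_inl_inl {a b : α} :
    (DisjUnion G₁ G₂).Adj (.inl a) (.inl b) ↔ G₁.Adj a b := by
  simp only [DisjUnion, fromRel_adj, ne_eq, Sum.inl.injEq]
  exact ⟨fun h => h.2.elim id (·.symm), fun h => ⟨h.ne, .inl h⟩⟩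

@[simp] lemma disjUnion_adj_inr_inr {a b : β} :
    (DisjUnion G₁ G₂).Adj (.inr a) (.inr b) ↔ G₂.Adj a b := by
  simp only [DisjUnion, fromRel_adj, ne_eq, Sum.inr.injEq]
  exact ⟨fun h => h.2.elim id (·.symm), fun h => ⟨h.ne, .inl h⟩⟩

@[simp] lemma disjUnion_not_adj_inl_inr {a : α} {b : β} :
    ¬ (DisjUnion G₁ G₂).Adj (.inl a) (.inr b) := by
  simp [DisjUnion, fromRel_adj]

@[simp] lemma disjUnion_not_adj_inr_inl {a : β} {b : α} :
    ¬ (DisjUnion G₁ G₂).Adj (.inr a) (.inl b) := by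
  simp [DisjUnion, fromRel_adj]

end DisjUnion

@[simp] lemma hGraph_adj {m : ℕ} {i j : Fin m} :
    (HGraph m).Adj i j ↔ i ≠ j ∧ (i.val < 2 ∨ j.val < 2) := by
  simp [HGraph, fromRel_adj]

lemma isH2UnionHm_disjUnion {m : ℕ} (hm : 2 ≤ m) :
    IsH2UnionHm (DisjUnion (HGraph 2) (HGraph m)) (.inl 0) (.inl 1)
      (.inr ⟨0, by omega⟩) (.inr ⟨1, by omega⟩) := by
  refine ⟨?_, ?_, by simp, ⟨by simp, by simp, ?_⟩, ⟨by simp, by simp, ?_⟩, ?_⟩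
  · rintro (j | j)
    · fin_cases j <;> simp
    · simp
  · rintro (j | j)
    · fin_cases j <;> simp
    · simp
  · rintro (j | j) h₁ h₂ h₃
    · fin_cases j <;> simp at h₁ h₂
    · simp only [ne_eq, Sum.inr.injEq, Fin.ext_iff] at h₃ ⊢
      simp [Fin.ext_iff, Ne.symm h₃]
  · rintro (j | j) h₁ h₂ h₃
    · fin_cases j <;> simp at h₁ h₂
    · simp only [ne_eq, Sum.inr.injEq, Fin.ext_iff] at h₃ ⊢
      simp [Fin.ext_iff, Ne.symm h₃]
  · rintro (i | i) (j | j) h₁ h₂ h₃ h₄ h₅ h₆ h₇ h₈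
    · fin_cases i <;> simp at h₁ h₂
    · fin_cases i <;> simp at h₁ h₂
    · fin_cases j <;> simp at h₅ h₆
    · simp only [ne_eq, Sum.inr.injEq, Fin.ext_iff] at h₃ h₄ h₇ h₈
      simp
      omega

namespace IsH2UnionHm

variable {W : Type*} {H : SimpleGraph W}

lemma map (S : IsH2UnionHm G v w x y) (f : G ≃g H) :
    IsH2UnionHm H (f v) (f w) (f x) (f y) := by
  have hub : ∀ h, IsHub G v w h → IsHub H (f v) (f w) (f h) := fun h hh =>
    ⟨f.injective.ne hh.ne_left, f.injective.ne hh.ne_right, f.surjective.forall.2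
      fun u huv huw huh => by
        simpa [f.map_adj_iff] using
          hh.adj u (by simpa using huv) (by simpa using huw) (by simpa using huh)⟩
  refine ⟨f.surjective.forall.2 fun u => ?_, f.surjective.forall.2 fun u => ?_,
    f.injective.ne S.x_ne_y, hub x S.isHub_x, hub y S.isHub_y,
    f.surjective.forall.2 fun a => f.surjective.forall.2 fun b => ?_⟩
  · simpa [f.map_adj_iff] using S.adj_left_iff u
  · simpa [f.map_adj_iff] using S.adj_right_iff u
  · simpa [f.map_adj_iff] using S.not_adj a b

lemma injective (S : IsH2UnionHm G v w x y) : Function.Injective ![v, w, x, y] := by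
  have hx := S.isHub_x
  have hy := S.isHub_y
  simp only [Matrix.vecCons, Fin.cons_injective_iff]
  simp [Function.injective_of_subsingleton, S.v_ne_w, S.x_ne_y, hx.ne_left.symm, hx.ne_right.symm,
    hy.ne_left.symm, hy.ne_right.symm]

def iso (S : IsH2UnionHm G v w x y) (E : V ≃ W) (S' : IsH2UnionHm H (E v) (E w) (E x) (E y)) :
    G ≃g H :=
  ⟨E, by intro a b; rw [S'.adj_iff, S.adj_iff]; simp⟩

lemma exists_iso [Fintype V] (S : IsH2UnionHm G v w x y) :
    ∃ m, 2 ≤ m ∧ Nonempty (G ≃g DisjUnion (HGraph 2) (HGraph m)) := by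
  have h4 := Fintype.card_le_of_injective _ S.injective
  rw [Fintype.card_fin] at h4
  have hm : 2 ≤ Fintype.card V - 2 := by omega
  let e : V ≃ Fin 2 ⊕ Fin (Fintype.card V - 2) := Fintype.equivOfCardEq (by simp; omega)
  obtain ⟨σ, hσ⟩ := Equiv.Perm.exists_extending_pair _ _ (e.injective.comp S.injective)
    (isH2UnionHm_disjUnion hm).injective
  refine ⟨_, hm, ⟨S.iso (e.trans σ) ?_⟩⟩
  convert isH2UnionHm_disjUnion hm using 1
  exacts [hσ 0, hσ 1, hσ 2, hσ 3]

end IsH2UnionHm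

end

theorem stmt2 {V : Type*} [Fintype V] (G : SimpleGraph V)
    (hδ₁ : ∃ v : V, (G.neighborSet v).ncard = 1) :
    Critical2 G ↔ ∃ m : ℕ, 2 ≤ m ∧ Nonempty (G ≃g DisjUnion (HGraph 2) (HGraph m)) := by
  constructor
  · intro hC
    obtain ⟨v, hv⟩ := hδ₁
    obtain ⟨w, hw⟩ := Set.ncard_eq_one.mp hv
    obtain ⟨x, y, S⟩ := hC.exists_isH2UnionHm hw
    exact S.exists_iso
  · rintro ⟨m, hm, ⟨f⟩⟩
    exact ((isH2UnionHm_disjUnion hm).map f.symm).critical2
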